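/- Let μ be a compactly supported probability measure on ℝ with moments m_k = ∫ x^k dμ(x), and let a, b, c, d, e ∈ ℝ satisfy c + e ≠ 0 and (e ≠ 0 or d = 0). Suppose that for every n ≥ 1, a Σ_{i=0}^{n−2} m_i m_{n−2−i} + b Σ_{i=0}^{n−1} m_i m_{n−1−i} + c Σ_{i=0}^{n} m_i m_{n−i} + d m_{n−1} + e m_n = 0. Then the operator Q[f] = (a + b x + c x²) L_μ[L_μ[f]] + (d + e x) L_μ[f] on ℝ[x] has a polynomial system of eigenfunctions; it can be chosen of the form P_0 = 1 with eigenvalue 0, P_1 = x + α with e α = d and eigenvalue e, and P_n = x^n + β_n x + γ_n with eigenvalue c + e for n ≥ 2. -/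

import Mathlib

open MeasureTheory Polynomial

/-- Moments of a measure on ℝ. -/
noncomputable def mom (ρ : Measure ℝ) (k : ℕ) : ℝ := ∫ x, x ^ k ∂ρ

/-- The operator `L_ρ` on polynomials, defined via the moment sequence `m` of `ρ`:
`L[x^n] = Σ_{k=0}^{n-1} m_{n-1-k} x^k`. -/
noncomputable def Lop (m : ℕ → ℝ) (f : Polynomial ℝ) : Polynomial ℝ :=
  f.sum fun n a => C a * ∑ k ∈ Finset.range n, C (m (n - 1 - k)) * X ^ k

/-- A measure has compact support. -/
def CompactSupp (μ : Measure ℝ) : Prop := ∃ K : Set ℝ, IsCompact K ∧ μ Kᶜ = 0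

/-- A polynomial system of eigenfunctions for an operator on polynomials. -/
def HasPolyEigenfunctions (Q : Polynomial ℝ → Polynomial ℝ) : Prop :=
  ∃ (P : ℕ → Polynomial ℝ) (lam : ℕ → ℝ),
    (∀ n, (P n).degree = (n : WithBot ℕ)) ∧ (∀ n, Q (P n) = lam n • P n)

/-!
Integrating `(x f(x) - y f(y)) / (x - y) = x (f(x) - f(y)) / (x - y) + f(y)` against `ρ` gives
`L[x f] = x L[f] + ∫ f dρ`, hence `Q[x f] = x Q[f] + (a + b x + c x²) ∫ L[f] dρ + (d + e x) ∫ f dρ`.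
Applied to `f = x^n`, where `∫ L[x^n] dρ = Σ_{i+j=n-1} m_i m_j`, this shows by induction that
`Q[x^n] - (c + e) x^n` is a polynomial of degree at most one whose `x`-coefficient is
`-c Σ_{i+j=n-1} m_i m_j`: the moment recursion is exactly what cancels the `x`-coefficient created
at each step. As `Q` maps `1 ↦ 0` and `x ↦ d + e x`, the affine corrections `β x + γ` can then be
solved for, using `c + e ≠ 0` for `γ`.
-/

open Finset

section

variable (m : ℕ → ℝ)

/-- Integration against a measure with moment sequence `m`. -/
noncomputable def momentIntegral : ℝ[X] →ₗ[ℝ] ℝ :=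
  Polynomial.lsum fun k => m k • LinearMap.id

/-- `momentConv m n = Σ_{i+j=n-1} m_i m_j`, the coefficient of `z^(n-1)` in `(Σ m_k z^k)²`. -/
noncomputable def momentConv (n : ℕ) : ℝ :=
  ∑ i ∈ range n, m i * m (n - 1 - i)

def MomentRecursion (a b c d e : ℝ) : Prop :=
  ∀ n, 1 ≤ n → a * momentConv m (n - 1) + b * momentConv m n + c * momentConv m (n + 1)
    + d * m (n - 1) + e * m n = 0

noncomputable def Qop (a b c d e : ℝ) (f : ℝ[X]) : ℝ[X] :=
  (C a + C b * X + C c * X ^ 2) * Lop m (Lop m f) + (C d + C e * X) * Lop m f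

lemma momentConv_zero : momentConv m 0 = 0 :=
  sum_range_zero _

lemma momentIntegral_monomial (k : ℕ) (r : ℝ) : momentIntegral m (monomial k r) = r * m k := by
  simp [momentIntegral, mul_comm]

lemma momentIntegral_X_pow (k : ℕ) : momentIntegral m (X ^ k) = m k := by
  simp [X_pow_eq_monomial, momentIntegral_monomial]

lemma Lop_add (p q : ℝ[X]) : Lop m (p + q) = Lop m p + Lop m q := by
  unfold Lop
  rw [sum_add_index] <;> intros <;> simp [add_mul]

lemma Lop_X_pow (n : ℕ) : Lop m (X ^ n) = ∑ k ∈ range n, C (m (n - 1 - k)) * X ^ k := by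
  simp [Lop, X_pow_eq_monomial, sum_monomial_index]

lemma Lop_monomial (n : ℕ) (r : ℝ) : Lop m (monomial n r) = C r * Lop m (X ^ n) := by
  simp [Lop, X_pow_eq_monomial, sum_monomial_index]

lemma Lop_zero : Lop m 0 = 0 := by
  simp [Lop]

lemma Lop_one : Lop m 1 = 0 := by
  simpa using Lop_X_pow m 0

lemma Lop_C (r : ℝ) : Lop m (C r) = 0 := by
  rw [← monomial_zero_left, Lop_monomial, pow_zero, Lop_one, mul_zero]

lemma Lop_X (hm0 : m 0 = 1) : Lop m X = 1 := by
  simpa [hm0] using Lop_X_pow m 1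

lemma Lop_C_mul (r : ℝ) (f : ℝ[X]) : Lop m (C r * f) = C r * Lop m f := by
  induction f using Polynomial.induction_on' with
  | add p q hp hq => rw [mul_add, Lop_add, Lop_add, hp, hq, mul_add]
  | monomial k s => rw [C_mul_monomial, Lop_monomial, Lop_monomial, C_mul, mul_assoc]

lemma Lop_X_pow_succ (n : ℕ) : Lop m (X ^ (n + 1)) = X * Lop m (X ^ n) + C (m n) := by
  rw [Lop_X_pow, Lop_X_pow, sum_range_succ', mul_sum]
  congr 1
  · refine sum_congr rfl fun k _ => ?_
    rw [show n + 1 - 1 - (k + 1) = n - 1 - k by omega]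
    ring
  · simp

lemma Lop_X_mul (f : ℝ[X]) : Lop m (X * f) = X * Lop m f + C (momentIntegral m f) := by
  induction f using Polynomial.induction_on' with
  | add p q hp hq => simp only [mul_add, Lop_add, hp, hq, map_add]; ring
  | monomial k r =>
    rw [X_mul_monomial, Lop_monomial, Lop_monomial, Lop_X_pow_succ, momentIntegral_monomial,
      C_mul]
    ring

lemma momentIntegral_Lop_X_pow (n : ℕ) : momentIntegral m (Lop m (X ^ n)) = momentConv m n := by
  simp only [Lop_X_pow, map_sum, C_mul_X_pow_eq_monomial, momentIntegral_monomial, momentConv]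
  exact sum_congr rfl fun _ _ => mul_comm _ _

variable (a b c d e : ℝ)

lemma Qop_add (p q : ℝ[X]) : Qop m a b c d e (p + q) = Qop m a b c d e p + Qop m a b c d e q := by
  simp only [Qop, Lop_add]
  ring

lemma Qop_C_mul (r : ℝ) (p : ℝ[X]) : Qop m a b c d e (C r * p) = C r * Qop m a b c d e p := by
  simp only [Qop, Lop_C_mul]
  ring

lemma Qop_C (r : ℝ) : Qop m a b c d e (C r) = 0 := by
  rw [Qop, Lop_C, Lop_zero]
  ring

lemma Qop_one : Qop m a b c d e 1 = 0 := by
  simpa using Qop_C m a b c d e 1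

lemma Qop_X (hm0 : m 0 = 1) : Qop m a b c d e X = C d + C e * X := by
  rw [Qop, Lop_X m hm0, Lop_one]
  ring

lemma Qop_X_pow_succ (n : ℕ) :
    Qop m a b c d e (X ^ (n + 1)) = X * Qop m a b c d e (X ^ n)
      + C (momentConv m n) * (C a + C b * X + C c * X ^ 2) + C (m n) * (C d + C e * X) := by
  simp only [Qop, pow_succ', Lop_X_mul, Lop_add, Lop_C, momentIntegral_Lop_X_pow,
    momentIntegral_X_pow]
  ring

section

variable {m} {a b c d e}

lemma Qop_X_pow (hm0 : m 0 = 1)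
    (hrec : MomentRecursion m a b c d e)
    {n : ℕ} (hn : 1 ≤ n) :
    Qop m a b c d e (X ^ n) = C (c + e) * X ^ n - C (c * momentConv m n) * X
      + C (a * momentConv m (n - 1) + d * m (n - 1)) := by
  induction n, hn using Nat.le_induction with
  | base =>
    have hconv₁ : momentConv m 1 = 1 := by simp [momentConv, hm0]
    rw [Qop_X_pow_succ, pow_zero, Qop_one, Nat.sub_self, momentConv_zero, hconv₁, hm0]
    simp only [map_add, map_mul, map_zero, map_one]
    ring
  | succ n hn ih =>
    rw [Qop_X_pow_succ, ih, Nat.add_sub_cancel]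
    have hrecC := congrArg C (hrec n hn)
    simp only [map_add, map_mul, map_zero] at hrecC
    simp only [map_add, map_mul]
    linear_combination X * hrecC

lemma Qop_X_add_C (hm0 : m 0 = 1) {α : ℝ} (hα : e * α = d) :
    Qop m a b c d e (X + C α) = e • (X + C α) := by
  rw [Qop_add, Qop_X m a b c d e hm0, Qop_C, smul_eq_C_mul, ← hα, C_mul]
  ring

lemma Qop_X_pow_add_linear (hm0 : m 0 = 1)
    (hrec : MomentRecursion m a b c d e)
    {n : ℕ} (hn : 1 ≤ n) {γ : ℝ}
    (hγ : (c + e) * γ = a * momentConv m (n - 1) + d * m (n - 1) - d * momentConv m n) :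
    Qop m a b c d e (X ^ n + C (-momentConv m n) * X + C γ)
      = (c + e) • (X ^ n + C (-momentConv m n) * X + C γ) := by
  rw [Qop_add, Qop_add, Qop_C_mul, Qop_X m a b c d e hm0, Qop_C, Qop_X_pow hm0 hrec hn,
    smul_eq_C_mul]
  have hγC := congrArg C hγ
  simp only [map_add, map_mul, map_sub] at hγC
  simp only [map_add, map_mul, map_neg]
  linear_combination -hγC

end

lemma degree_X_pow_add_linear {n : ℕ} (hn : 2 ≤ n) (β γ : ℝ) :
    (X ^ n + C β * X + C γ : ℝ[X]).degree = n := by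
  rw [add_assoc, degree_add_eq_left_of_degree_lt, degree_X_pow]
  rw [degree_X_pow]
  exact degree_linear_le.trans_lt (by exact_mod_cast hn)

lemma hasPolyEigenfunctions_of_eigen_X_pow_add_linear {Q : ℝ[X] → ℝ[X]} {l₀ l₁ α : ℝ}
    {l β γ : ℕ → ℝ} (h₀ : Q 1 = l₀ • 1) (h₁ : Q (X + C α) = l₁ • (X + C α))
    (h : ∀ n, 2 ≤ n → Q (X ^ n + C (β n) * X + C (γ n)) = l n • (X ^ n + C (β n) * X + C (γ n))) :
    HasPolyEigenfunctions Q := by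
  refine ⟨fun | 0 => 1 | 1 => X + C α | n + 2 => X ^ (n + 2) + C (β (n + 2)) * X + C (γ (n + 2)),
    fun | 0 => l₀ | 1 => l₁ | n + 2 => l (n + 2), ?_, ?_⟩
  · rintro (_ | _ | n)
    · simp
    · simp [degree_X_add_C]
    · exact degree_X_pow_add_linear (by omega) _ _
  · rintro (_ | _ | n)
    · exact h₀
    · exact h₁
    · exact h (n + 2) (by omega)

end

theorem stmt2_general (μ : Measure ℝ) [IsProbabilityMeasure μ]
    (a b c d e : ℝ) (hce : c + e ≠ 0) (hed : e ≠ 0 ∨ d = 0)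
    (hrec : ∀ n : ℕ, 1 ≤ n →
      a * (∑ i ∈ Finset.range (n - 1), mom μ i * mom μ (n - 2 - i))
      + b * (∑ i ∈ Finset.range n, mom μ i * mom μ (n - 1 - i))
      + c * (∑ i ∈ Finset.range (n + 1), mom μ i * mom μ (n - i))
      + d * mom μ (n - 1) + e * mom μ n = 0) :
    HasPolyEigenfunctions
      (fun f => (C a + C b * X + C c * X ^ 2) * Lop (mom μ) (Lop (mom μ) f)
        + (C d + C e * X) * Lop (mom μ) f)
    ∧ ∃ (α : ℝ) (β γ : ℕ → ℝ),
        e * α = d ∧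
        (let Q := fun f => (C a + C b * X + C c * X ^ 2) * Lop (mom μ) (Lop (mom μ) f)
          + (C d + C e * X) * Lop (mom μ) f
         Q 1 = (0 : ℝ) • (1 : Polynomial ℝ) ∧
         Q (X + C α) = e • (X + C α) ∧
         ∀ n : ℕ, 2 ≤ n →
           Q (X ^ n + C (β n) * X + C (γ n)) = (c + e) • (X ^ n + C (β n) * X + C (γ n))) := by
  set m := mom μ
  have hm0 : m 0 = 1 := by simp [m, mom]
  have hconv : MomentRecursion m a b c d e := fun n hn => by
    simpa only [momentConv, Nat.sub_sub, Nat.add_sub_cancel] using hrec n hn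
  obtain ⟨α, hα⟩ : ∃ α, e * α = d := by
    rcases hed with he | rfl
    · exact ⟨d / e, mul_div_cancel₀ d he⟩
    · exact ⟨0, mul_zero e⟩
  let γ n := (a * momentConv m (n - 1) + d * m (n - 1) - d * momentConv m n) / (c + e)
  have h₀ : Qop m a b c d e 1 = (0 : ℝ) • 1 := by rw [Qop_one, zero_smul]
  have h₁ : Qop m a b c d e (X + C α) = e • (X + C α) := Qop_X_add_C hm0 hα
  have h : ∀ n, 2 ≤ n → Qop m a b c d e (X ^ n + C (-momentConv m n) * X + C (γ n))
      = (c + e) • (X ^ n + C (-momentConv m n) * X + C (γ n)) := fun n hn =>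
    Qop_X_pow_add_linear hm0 hconv (by omega) (mul_div_cancel₀ _ hce)
  exact ⟨hasPolyEigenfunctions_of_eigen_X_pow_add_linear h₀ h₁ h, α, _, γ, hα, h₀, h₁, h⟩

theorem stmt2 (μ : Measure ℝ) [IsProbabilityMeasure μ] (hcs : CompactSupp μ)
    (a b c d e : ℝ) (hce : c + e ≠ 0) (hed : e ≠ 0 ∨ d = 0)
    (hrec : ∀ n : ℕ, 1 ≤ n →
      a * (∑ i ∈ Finset.range (n - 1), mom μ i * mom μ (n - 2 - i))
      + b * (∑ i ∈ Finset.range n, mom μ i * mom μ (n - 1 - i))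
      + c * (∑ i ∈ Finset.range (n + 1), mom μ i * mom μ (n - i))
      + d * mom μ (n - 1) + e * mom μ n = 0) :
    HasPolyEigenfunctions
      (fun f => (C a + C b * X + C c * X ^ 2) * Lop (mom μ) (Lop (mom μ) f)
        + (C d + C e * X) * Lop (mom μ) f)
    ∧ ∃ (α : ℝ) (β γ : ℕ → ℝ),
        e * α = d ∧
        (let Q := fun f => (C a + C b * X + C c * X ^ 2) * Lop (mom μ) (Lop (mom μ) f)
          + (C d + C e * X) * Lop (mom μ) f
         Q 1 = (0 : ℝ) • (1 : Polynomial ℝ) ∧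
         Q (X + C α) = e • (X + C α) ∧
         ∀ n : ℕ, 2 ≤ n →
           Q (X ^ n + C (β n) * X + C (γ n)) = (c + e) • (X ^ n + C (β n) * X + C (γ n))) :=
  stmt2_general μ a b c d e hce hed hrec
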